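/- Assume the products are indexed so that v_1 ≥ v_2 ≥ … ≥ v_n > 0, and for T ∈ ℕ write E_T(M(S)) for the expected maximum load of assortment S with T customers. Then there exists a threshold T̄ ∈ ℕ such that for every T ≥ T̄, E_T(M({1})) = max_{S ⊆ {1,…,n}} E_T(M(S)); that is, offering only the single heaviest product is optimal for the static maximum load assortment problem whenever the number of customers is sufficiently large. -/

import Mathlib

/-!
The singleton of the heaviest product has expected maximum load exactly `T v₁ / (1 + v₁)`, and
no assortment with at most one product does better. In an assortment with at least two
products every choice probability is at most `q = v₁ / (1 + v₁ + min v) < v₁ / (1 + v₁)`. Each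
load is a sum of `T` i.i.d. indicators, so its variance is at most `T` and, by Cauchy–Schwarz,
its mean absolute deviation at most `√T`; hence the expected maximum load is at most
`T q + n √T`, which drops below `T v₁ / (1 + v₁)` once `T` is large.
-/
open Finset

/-- MNL choice probability of product `i` when assortment `S` is offered. -/
noncomputable def phi {n : ℕ} (v : Fin n → ℝ) (S : Finset (Fin n)) (i : Fin n) : ℝ :=
  v i / (1 + ∑ j ∈ S, v j)

/-- MNL no-purchase probability when assortment `S` is offered. -/
noncomputable def phi0 {n : ℕ} (v : Fin n → ℝ) (S : Finset (Fin n)) : ℝ :=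
  1 / (1 + ∑ j ∈ S, v j)

/-- Probability of a single customer's choice when assortment `S` is offered:
`some i` (select product `i ∈ S`) has probability `φ_i(S)`, products outside `S`
are never selected, and `none` (no purchase) has probability `φ_0(S)`. -/
noncomputable def chooseProb {n : ℕ} (v : Fin n → ℝ) (S : Finset (Fin n)) :
    Option (Fin n) → ℝ
  | none => phi0 v S
  | some i => if i ∈ S then phi v S i else 0

/-- `staticEM T v S` is the expected maximum load `E(M(S))` when assortment `S` is
statically offered to `T` customers making independent MNL choices:
`M(S) = max_{i ∈ S} L_i(S)` where `L_i(S)` counts the customers selecting `i`. -/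
noncomputable def staticEM {n : ℕ} (T : ℕ) (v : Fin n → ℝ) (S : Finset (Fin n)) : ℝ :=
  ∑ f : Fin T → Option (Fin n),
    (∏ t, chooseProb v S (f t)) *
      ((S.sup fun i => (Finset.univ.filter fun t => f t = some i).card : ℕ) : ℝ)

namespace IID

variable {α ι : Type*} {T : ℕ}

def load [DecidableEq α] (f : Fin T → α) (a : α) : ℕ := #{t | f t = a}

lemma load_sub_eq_sum [DecidableEq α] (f : Fin T → α) (a : α) (q : ℝ) :
    (load f a : ℝ) - T * q = ∑ t, ((if f t = a then 1 else 0) - q) := by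
  simp [load, sum_sub_distrib, sum_boole]

variable [Fintype α] {p : α → ℝ}

noncomputable def expect (p : α → ℝ) (X : (Fin T → α) → ℝ) : ℝ :=
  ∑ f, (∏ t, p (f t)) * X f

lemma expect_add (X Y : (Fin T → α) → ℝ) :
    expect p (fun f => X f + Y f) = expect p X + expect p Y := by
  simp only [expect, mul_add, sum_add_distrib]

lemma expect_sum (s : Finset ι) (X : ι → (Fin T → α) → ℝ) :
    expect p (fun f => ∑ i ∈ s, X i f) = ∑ i ∈ s, expect p (X i) := by
  simp only [expect, mul_sum]
  exact sum_comm

lemma expect_mono (hp : ∀ a, 0 ≤ p a) {X Y : (Fin T → α) → ℝ} (hXY : ∀ f, X f ≤ Y f) :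
    expect p X ≤ expect p Y :=
  sum_le_sum fun f _ => mul_le_mul_of_nonneg_left (hXY f) (prod_nonneg fun t _ => hp (f t))

lemma expect_prod (g : Fin T → α → ℝ) :
    expect p (fun f => ∏ t, g t (f t)) = ∏ t, ∑ a, p a * g t a := by
  simp only [expect, ← prod_mul_distrib]
  exact (Fintype.prod_sum fun t a => p a * g t a).symm

lemma sum_prod_apply_eq_one (hp : ∑ a, p a = 1) : ∑ f : Fin T → α, ∏ t, p (f t) = 1 := by
  rw [← Fintype.prod_sum, hp, prod_const_one]

lemma expect_const (hp : ∑ a, p a = 1) (c : ℝ) : expect p (fun _ : Fin T → α => c) = c := by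
  rw [expect, ← sum_mul, sum_prod_apply_eq_one hp, one_mul]

lemma expect_apply (hp : ∑ a, p a = 1) (t : Fin T) (g : α → ℝ) :
    expect p (fun f => g (f t)) = ∑ a, p a * g a := by
  let G : Fin T → α → ℝ := fun s a => if s = t then g a else 1
  have factor : (fun f : Fin T → α => g (f t)) = fun f => ∏ s, G s (f s) := by
    ext f
    simp only [G, prod_ite_eq', if_pos (mem_univ _)]
  have factor_expect : ∀ s, ∑ a, p a * G s a = if s = t then ∑ a, p a * g a else 1 := by
    intro s
    by_cases hst : s = t <;> simp [G, hst, hp]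
  rw [factor, expect_prod, prod_congr rfl fun s _ => factor_expect s, prod_ite_eq',
    if_pos (mem_univ _)]

lemma expect_apply_mul_apply (hp : ∑ a, p a = 1) {t u : Fin T} (htu : t ≠ u)
    (g g' : α → ℝ) :
    expect p (fun f => g (f t) * g' (f u)) = (∑ a, p a * g a) * ∑ a, p a * g' a := by
  let G : Fin T → α → ℝ := fun s a => (if s = t then g a else 1) * (if s = u then g' a else 1)
  have factor : (fun f : Fin T → α => g (f t) * g' (f u)) = fun f => ∏ s, G s (f s) := by
    ext f
    simp only [G, prod_mul_distrib, prod_ite_eq', if_pos (mem_univ _)]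
  have factor_expect : ∀ s, ∑ a, p a * G s a =
      (if s = t then ∑ a, p a * g a else 1) * (if s = u then ∑ a, p a * g' a else 1) := by
    intro s
    by_cases hst : s = t
    · simp [G, hst, htu]
    · by_cases hsu : s = u <;> simp [G, hst, hsu, htu.symm, hp]
  rw [factor, expect_prod, prod_congr rfl fun s _ => factor_expect s, prod_mul_distrib,
    prod_ite_eq', prod_ite_eq', if_pos (mem_univ _), if_pos (mem_univ _)]

lemma expect_sq_sum_apply (hp : ∑ a, p a = 1) (h : α → ℝ) (hh : ∑ a, p a * h a = 0) :
    expect p (fun f : Fin T → α => (∑ t, h (f t)) ^ 2) = T * ∑ a, p a * h a ^ 2 := by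
  have expand : ∀ f : Fin T → α, (∑ t, h (f t)) ^ 2 = ∑ t, ∑ u, h (f t) * h (f u) := by
    intro f
    rw [sq, sum_mul_sum]
  have pair : ∀ t u : Fin T, expect p (fun f => h (f t) * h (f u)) =
      if t = u then ∑ a, p a * h a ^ 2 else 0 := by
    intro t u
    split_ifs with htu
    · subst htu
      simp only [← sq]
      exact expect_apply hp t fun a => h a ^ 2
    · rw [expect_apply_mul_apply hp htu, hh, zero_mul]
  simp only [expand, expect_sum, pair, sum_ite_eq, mem_univ, if_true, sum_const, card_univ,
    Fintype.card_fin, nsmul_eq_mul]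

lemma sq_expect_abs_le (hp0 : ∀ a, 0 ≤ p a) (hp : ∑ a, p a = 1) (X : (Fin T → α) → ℝ) :
    expect p (fun f => |X f|) ^ 2 ≤ expect p (fun f => X f ^ 2) := by
  have weight_nonneg : ∀ f : Fin T → α, 0 ≤ ∏ t, p (f t) := fun f => prod_nonneg fun t _ => hp0 _
  have cauchy_schwarz := sum_sq_le_sum_mul_sum_of_sq_le_mul univ
    (r := fun f => (∏ t, p (f t)) * |X f|) (fun f _ => weight_nonneg f)
    (fun f _ => mul_nonneg (weight_nonneg f) (sq_nonneg (X f)))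
    (fun f _ => by rw [mul_pow, sq_abs, sq, mul_assoc])
  rwa [sum_prod_apply_eq_one hp, one_mul] at cauchy_schwarz

variable [DecidableEq α]

lemma expect_load (hp : ∑ a, p a = 1) (a : α) :
    expect p (fun f : Fin T → α => (load f a : ℝ)) = T * p a := by
  have load_eq_sum : (fun f : Fin T → α => (load f a : ℝ)) =
      fun f => ∑ t, if f t = a then 1 else 0 := by
    ext f
    simp [load, sum_boole]
  rw [load_eq_sum, expect_sum]
  simp only [sum_congr rfl fun t _ => expect_apply hp t fun b => if b = a then 1 else 0, mul_ite,
    mul_one, mul_zero, sum_ite_eq', mem_univ, if_true, sum_const, card_univ, Fintype.card_fin,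
    nsmul_eq_mul]

lemma expect_sq_load_sub (hp : ∑ a, p a = 1) (a : α) :
    expect p (fun f : Fin T → α => ((load f a : ℝ) - T * p a) ^ 2) = T * (p a * (1 - p a)) := by
  have sq_indicator : ∀ b, ((if b = a then 1 else 0) - p a) ^ 2 =
      (1 - 2 * p a) * (if b = a then 1 else 0) + p a ^ 2 := by
    intro b
    split_ifs <;> ring
  simp only [load_sub_eq_sum]
  rw [expect_sq_sum_apply hp fun b => (if b = a then 1 else 0) - p a]
  · simp only [sq_indicator, mul_add, sum_add_distrib, ← sum_mul, hp, mul_ite, mul_one, mul_zero,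
      sum_ite_eq', mem_univ, if_true]
    ring
  · simp only [mul_sub, sum_sub_distrib, ← sum_mul, hp, mul_ite, mul_one, mul_zero, sum_ite_eq',
      mem_univ, if_true]
    ring

lemma expect_abs_load_sub_le_sqrt (hp0 : ∀ a, 0 ≤ p a) (hp : ∑ a, p a = 1) (a : α) :
    expect p (fun f : Fin T → α => |(load f a : ℝ) - T * p a|) ≤ √T := by
  apply Real.le_sqrt_of_sq_le
  calc _ ≤ _ := sq_expect_abs_le hp0 hp _
    _ = T * (p a * (1 - p a)) := expect_sq_load_sub hp a
    _ ≤ T := by nlinarith [sq_nonneg (2 * p a - 1), T.cast_nonneg (α := ℝ)]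

lemma expect_sup_load_le (hp0 : ∀ a, 0 ≤ p a) (hp : ∑ a, p a = 1) {S : Finset ι}
    (hS : S.Nonempty) (x : ι → α) {b : ℝ} (hb : ∀ i ∈ S, p (x i) ≤ b) :
    expect p (fun f : Fin T → α => ((S.sup fun i => load f (x i) : ℕ) : ℝ)) ≤ T * b + #S * √T := by
  have pointwise : ∀ f : Fin T → α, ((S.sup fun i => load f (x i) : ℕ) : ℝ) ≤
      T * b + ∑ i ∈ S, |(load f (x i) : ℝ) - T * p (x i)| := by
    intro f
    obtain ⟨i, hi, hsup⟩ := exists_mem_eq_sup S hS fun i => load f (x i)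
    rw [hsup]
    calc (load f (x i) : ℝ) ≤ T * p (x i) + |(load f (x i) : ℝ) - T * p (x i)| := by
          linarith [le_abs_self ((load f (x i) : ℝ) - T * p (x i))]
      _ ≤ _ := add_le_add (mul_le_mul_of_nonneg_left (hb i hi) T.cast_nonneg)
          (single_le_sum (f := fun j => |(load f (x j) : ℝ) - T * p (x j)|)
            (fun j _ => abs_nonneg _) hi)
  calc _ ≤ _ := expect_mono hp0 pointwise
    _ = T * b + ∑ i ∈ S, expect p (fun f => |(load f (x i) : ℝ) - T * p (x i)|) := by
      rw [expect_add, expect_const hp, expect_sum]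
    _ ≤ T * b + ∑ i ∈ S, √T := by
      gcongr with i
      exact expect_abs_load_sub_le_sqrt hp0 hp _
    _ = T * b + #S * √T := by rw [sum_const, nsmul_eq_mul]

end IID

lemma eventually_mul_add_mul_sqrt_le {a b : ℝ} (hab : a < b) (c : ℝ) :
    ∀ᶠ T : ℕ in Filter.atTop, T * a + c * √T ≤ T * b := by
  filter_upwards [(Real.tendsto_sqrt_atTop.comp tendsto_natCast_atTop_atTop).eventually_ge_atTop
    (c / (b - a))] with T hT
  rw [Function.comp_apply, div_le_iff₀' (sub_pos.2 hab)] at hT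
  have key := mul_le_mul_of_nonneg_right hT (Real.sqrt_nonneg T)
  rw [mul_assoc, Real.mul_self_sqrt T.cast_nonneg] at key
  linarith

section MNL

variable {n : ℕ} {v : Fin n → ℝ}

lemma one_add_sum_pos (hv : ∀ i, 0 < v i) (S : Finset (Fin n)) : 0 < 1 + ∑ j ∈ S, v j :=
  add_pos_of_pos_of_nonneg one_pos (sum_nonneg fun j _ => (hv j).le)

lemma chooseProb_nonneg (hv : ∀ i, 0 < v i) (S : Finset (Fin n)) (a : Option (Fin n)) :
    0 ≤ chooseProb v S a := by
  have hD := one_add_sum_pos hv S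
  cases a with
  | none => exact div_nonneg zero_le_one hD.le
  | some i =>
    rw [chooseProb]
    split_ifs
    · exact div_nonneg (hv i).le hD.le
    · exact le_rfl

lemma sum_chooseProb (hv : ∀ i, 0 < v i) (S : Finset (Fin n)) :
    ∑ a, chooseProb v S a = 1 := by
  have hD := (one_add_sum_pos hv S).ne'
  simp only [Fintype.sum_option, chooseProb, sum_ite_mem, univ_inter, phi0, phi, ← sum_div]
  field_simp

lemma staticEM_eq_expect (T : ℕ) (S : Finset (Fin n)) :
    staticEM T v S =
      IID.expect (chooseProb v S) fun f : Fin T → Option (Fin n) =>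
        ((S.sup fun i => IID.load f (some i) : ℕ) : ℝ) :=
  rfl

lemma staticEM_singleton (hv : ∀ i, 0 < v i) (T : ℕ) (i : Fin n) :
    staticEM T v {i} = T * (v i / (1 + v i)) := by
  rw [staticEM_eq_expect]
  simp only [sup_singleton]
  rw [IID.expect_load (sum_chooseProb hv _)]
  simp [chooseProb, phi]

lemma staticEM_le_of_card_le_one (hv : ∀ i, 0 < v i) (T : ℕ) {S : Finset (Fin n)}
    (hS : #S ≤ 1) {i : Fin n} (hi : ∀ j ∈ S, v j ≤ v i) :
    staticEM T v S ≤ T * (v i / (1 + v i)) := by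
  have hvi := hv i
  rcases S.eq_empty_or_nonempty with rfl | hne
  · simp only [staticEM, sup_empty, Nat.bot_eq_zero, Nat.cast_zero, mul_zero, sum_const_zero]
    exact mul_nonneg T.cast_nonneg (div_nonneg hvi.le (by linarith))
  · obtain ⟨j, rfl⟩ := card_eq_one.1 (le_antisymm hS hne.card_pos)
    have hvj := hv j
    have hji := hi j (mem_singleton_self j)
    rw [staticEM_singleton hv]
    refine mul_le_mul_of_nonneg_left ?_ T.cast_nonneg
    rw [div_le_div_iff₀ (by linarith) (by linarith)]
    nlinarith

lemma chooseProb_some_le_of_two_le_card (hv : ∀ i, 0 < v i) {S : Finset (Fin n)}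
    (hS : 2 ≤ #S) {i : Fin n} (hi : i ∈ S) {M m : ℝ} (hM : v i ≤ M) (hm0 : 0 ≤ m)
    (hm : ∀ j ∈ S, m ≤ v j) :
    chooseProb v S (some i) ≤ M / (1 + M + m) := by
  obtain ⟨j, hj, hji⟩ := exists_mem_ne hS i
  have hsum : v i + m ≤ ∑ k ∈ S, v k :=
    calc v i + m ≤ v i + v j := by linarith [hm j hj]
      _ = ∑ k ∈ {i, j}, v k := (sum_pair hji.symm).symm
      _ ≤ ∑ k ∈ S, v k := sum_le_sum_of_subset_of_nonneg
          (insert_subset hi (singleton_subset_iff.2 hj)) fun k _ _ => (hv k).le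
  have hvi := hv i
  rw [chooseProb, if_pos hi, phi, div_le_div_iff₀ (one_add_sum_pos hv S) (by linarith)]
  nlinarith [mul_le_mul_of_nonneg_right hM (by linarith : (0 : ℝ) ≤ 1 + m)]

lemma staticEM_le_of_two_le_card (hv : ∀ i, 0 < v i) (T : ℕ) {S : Finset (Fin n)}
    (hS : 2 ≤ #S) {M m : ℝ} (hM : ∀ j ∈ S, v j ≤ M) (hm0 : 0 ≤ m) (hm : ∀ j ∈ S, m ≤ v j) :
    staticEM T v S ≤ T * (M / (1 + M + m)) + n * √T := by
  have hcard : (#S : ℝ) ≤ n := by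
    exact_mod_cast (card_le_univ S).trans_eq (Fintype.card_fin n)
  calc staticEM T v S ≤ T * (M / (1 + M + m)) + #S * √T :=
        IID.expect_sup_load_le (chooseProb_nonneg hv S) (sum_chooseProb hv S)
          (card_pos.1 (by omega)) some fun i hi =>
            chooseProb_some_le_of_two_le_card hv hS hi (hM i hi) hm0 hm
    _ ≤ T * (M / (1 + M + m)) + n * √T := by gcongr

end MNL

/-- In the many-customers regime, offering only the single heaviest product is optimal:
there is a threshold `T̄` such that for every number of customers `T ≥ T̄`, the expected
maximum load of the singleton assortment consisting of the heaviest product equals the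
maximum expected maximum load over all assortments. -/
theorem heaviest_product_optimal_for_large_T
    (n : ℕ) (hn : 0 < n) (v : Fin n → ℝ) (hv : ∀ i, 0 < v i)
    (hsorted : ∀ i j : Fin n, i ≤ j → v j ≤ v i) :
    ∃ Tbar : ℕ, ∀ T : ℕ, Tbar ≤ T →
      staticEM T v {(⟨0, hn⟩ : Fin n)} =
        Finset.univ.powerset.sup' ⟨∅, Finset.empty_mem_powerset _⟩ (staticEM T v) := by
  set i₀ : Fin n := ⟨0, hn⟩
  have hmax : ∀ j, v j ≤ v i₀ := fun j => hsorted i₀ j (Nat.zero_le j)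
  obtain ⟨m, hm0, hm⟩ : ∃ m, 0 < m ∧ ∀ j, m ≤ v j :=
    ⟨univ.inf' ⟨i₀, mem_univ _⟩ v, (lt_inf'_iff _).2 fun j _ => hv j,
      fun j => inf'_le v (mem_univ j)⟩
  have hgap : v i₀ / (1 + v i₀ + m) < v i₀ / (1 + v i₀) :=
    div_lt_div_of_pos_left (hv i₀) (by linarith [hv i₀]) (by linarith)
  obtain ⟨Tbar, hTbar⟩ := Filter.eventually_atTop.1 (eventually_mul_add_mul_sqrt_le hgap n)
  refine ⟨Tbar, fun T hT => le_antisymm (le_sup' _ (mem_powerset.2 (subset_univ _)))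
    (sup'_le _ _ fun S _ => ?_)⟩
  rw [staticEM_singleton hv]
  rcases le_or_gt #S 1 with hS | hS
  · exact staticEM_le_of_card_le_one hv T hS fun j _ => hmax j
  · exact (staticEM_le_of_two_le_card hv T hS (fun j _ => hmax j) hm0.le fun j _ => hm j).trans
      (hTbar T hT)
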